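/- arXiv:2205.08976 — 5 statements merged into one kernel-verified Lean document; each statement's English description precedes it below -/
import Mathlib

section
/- For a symbolic run σ: b₀ →a₁ b₁ → … →aₙ bₙ of a DDSA and a sequence of constraints θ⃗ = ⟨θ₀,…,θₙ⟩, an assignment α with domain V ∪ V₀ satisfies the history constraint hist(σ, θ⃗) if and only if σ abstracts a concrete run ρ: (b₀, α₀) →a₁ … →aₙ (bₙ, αₙ) such that (i) α₀(v) = α(ν(v)) for all v ∈ V, (ii) αₙ(v) = α(v) for all v ∈ V, and (iii) αᵢ ⊨ θᵢ for all 0 ≤ i ≤ n. -/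
section
variable {B A V D : Type}

/-- Semantic history constraint of a DDSA with data domain `D`.
`guard a u v` means the guard assignment with read values `u` and write values
`v` satisfies the guard of action `a`.  Free variables of the history
constraint are the current variables `V` (`Sum.inl`) and the initial copy
`V₀` (`Sum.inr`); `θ i` is the `i`-th verification constraint (free variables
`V`). -/
def histSem (write : A → Set V) (guard : A → (V → D) → (V → D) → Prop)
    (acts : ℕ → A) (θ : ℕ → (V → D) → Prop) : ℕ → ((V ⊕ V) → D) → Prop
  | 0, α => (∀ v, α (Sum.inl v) = α (Sum.inr v)) ∧ θ 0 (fun v => α (Sum.inl v))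
  | n + 1, α =>
      (∃ u : V → D,
        histSem write guard acts θ n (Sum.elim u fun v => α (Sum.inr v)) ∧
        guard (acts n) u (fun v => α (Sum.inl v)) ∧
        ∀ v ∉ write (acts n), α (Sum.inl v) = u v) ∧
      θ (n + 1) (fun v => α (Sum.inl v))

theorem histSem_iff_run_aux (write : A → Set V)
    (guard : A → (V → D) → (V → D) → Prop)
    (acts : ℕ → A) (θ : ℕ → (V → D) → Prop) :
    ∀ (n : ℕ) (α : (V ⊕ V) → D),
    histSem write guard acts θ n α ↔
      ∃ αs : ℕ → V → D,
        (∀ i < n,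
          (∀ v ∉ write (acts i), αs (i + 1) v = αs i v) ∧
          guard (acts i) (αs i) (αs (i + 1))) ∧
        (∀ v, αs 0 v = α (Sum.inr v)) ∧
        (∀ v, αs n v = α (Sum.inl v)) ∧
        (∀ i ≤ n, θ i (αs i)) := by
  intro n
  induction n with
  | zero =>
    intro α
    constructor
    · rintro ⟨heq, hθ⟩
      refine ⟨fun _ v => α (Sum.inr v), by omega, fun v => rfl,
        fun v => (heq v).symm, ?_⟩
      intro i hi
      interval_cases i
      have : (fun v => α (Sum.inr v)) = fun v => α (Sum.inl v) := by
        funext v; exact (heq v).symm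
      rw [this]; exact hθ
    · rintro ⟨αs, -, h0, hn, hθ⟩
      refine ⟨fun v => by rw [← h0 v, hn v], ?_⟩
      have : (fun v => α (Sum.inl v)) = αs 0 := by funext v; exact (hn v).symm
      rw [this]; exact hθ 0 le_rfl
  | succ n ih =>
    intro α
    constructor
    · rintro ⟨⟨u, hh, hg, hfr⟩, hθ⟩
      obtain ⟨αs, hrun, h0, hn, hθs⟩ := (ih _).1 hh
      refine ⟨fun i => if i ≤ n then αs i else fun v => α (Sum.inl v),
        ?_, ?_, ?_, ?_⟩
      · intro i hi
        rcases Nat.lt_succ_iff_lt_or_eq.1 hi with hi | rfl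
        · simp only [Nat.le_of_lt hi, Nat.succ_le_of_lt hi, if_pos]
          exact hrun i hi
        · simp only [le_rfl, if_pos, if_neg (Nat.not_succ_le_self _)]
          constructor
          · intro v hv; rw [hfr v hv]; exact (hn v).symm
          · have h2 : αs i = u := by funext v; exact hn v
            rw [h2]; exact hg
      · intro v; simp only [Nat.zero_le, if_pos]; exact h0 v
      · intro v; simp [Nat.not_succ_le_self]
      · intro i hi
        rcases Nat.lt_succ_iff_lt_or_eq.1 (Nat.lt_succ_of_le hi) with hi' | rfl
        · have hle := Nat.lt_succ_iff.1 hi'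
          simp only [hle, if_pos]
          exact hθs i hle
        · simp only [Nat.not_succ_le_self, if_neg, not_false_iff]
          exact hθ
    · rintro ⟨αs, hrun, h0, hn, hθs⟩
      refine ⟨⟨αs n, ?_, ?_, ?_⟩, ?_⟩
      · refine (ih _).2 ⟨αs, fun i hi => hrun i (Nat.lt_succ_of_lt hi),
          fun v => h0 v, fun v => rfl, fun i hi => hθs i (Nat.le_succ_of_le hi)⟩
      · have h1 : (fun v => α (Sum.inl v)) = αs (n+1) := by
          funext v; exact (hn v).symm
        rw [h1]; exact (hrun n (Nat.lt_succ_self n)).2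
      · intro v hv
        rw [← hn v]; exact (hrun n (Nat.lt_succ_self n)).1 v hv
      · have h1 : (fun v => α (Sum.inl v)) = αs (n+1) := by
          funext v; exact (hn v).symm
        rw [h1]; exact hθs (n+1) le_rfl

/-- **Lemma (abstraction).**  Let `σ : b₀ →a₁ b₁ → ⋯ →aₙ bₙ` be a symbolic run
of the DDSA (hypothesis `hσ`) and `θ⃗ = ⟨θ₀, …, θₙ⟩` a sequence of constraints.
An assignment `α` over `V ∪ V₀` satisfies the history constraint
`hist(σ, θ⃗)` iff `σ` abstracts a concrete run `(b₀,α₀) →a₁ ⋯ →aₙ (bₙ,αₙ)`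
(given by the data assignments `αs`) such that (i) `α₀(v) = α(ν v)`,
(ii) `αₙ(v) = α(v)` for all `v ∈ V`, and (iii) `αᵢ ⊨ θᵢ` for all `i ≤ n`. -/
theorem histSem_iff_run
    (trans : B → A → B → Prop) (write : A → Set V)
    (guard : A → (V → D) → (V → D) → Prop)
    (n : ℕ) (bs : ℕ → B) (acts : ℕ → A) (θ : ℕ → (V → D) → Prop)
    (hσ : ∀ i < n, trans (bs i) (acts i) (bs (i + 1)))
    (α : (V ⊕ V) → D) :
    histSem write guard acts θ n α ↔
      ∃ αs : ℕ → V → D,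
        (∀ i < n,
          (∀ v ∉ write (acts i), αs (i + 1) v = αs i v) ∧
          guard (acts i) (αs i) (αs (i + 1))) ∧
        (∀ v, αs 0 v = α (Sum.inr v)) ∧
        (∀ v, αs n v = α (Sum.inl v)) ∧
        (∀ i ≤ n, θ i (αs i)) := by
  exact histSem_iff_run_aux write guard acts θ n α

end
end

section
/- Suppose the translation function toLTL maps a CTL* path formula ψ to an LTL formula over configuration maps such that each subformula E η with lower quantifier depth is replaced by a configuration map K_η satisfying: for all configurations (b, α), there exists a final run ρ' from (b, α) with ρ' ⊨ η iff α ⊨ K_η(b). Then for every final run ρ, ρ ⊨ ψ (in CTL*_f path semantics) if and only if ρ ⊨_LTL toLTL(ψ) (in finite-trace LTL semantics over configuration maps). -/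
/-- Fuel-indexed finite-trace semantics of until (fuel = distance to end). -/
def untilSat (p q : ℕ → Prop) : ℕ → ℕ → Prop
  | 0, i => q i
  | f + 1, i => q i ∨ (p i ∧ untilSat p q f (i + 1))

/-- Fuel-indexed finite-trace semantics of globally. -/
def globSat (p : ℕ → Prop) : ℕ → ℕ → Prop
  | 0, i => p i
  | f + 1, i => p i ∧ globSat p f (i + 1)

/-- A data-aware dynamic system with arithmetic (DDSA):
control states `B`, actions `A`, data variables `V` over domain `D`. -/
structure DDSA (B A V D : Type) where
  trans : B → A → B → Prop
  write : A → Set V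
  /-- `guard a u v`: the guard assignment reading `u` and writing `v`
  satisfies the executability constraint of `a`. -/
  guard : A → (V → D) → (V → D) → Prop
  final : B → Prop

variable {B A V D : Type}

/-- A step `(b,α) →a (b',α')` of a DDSA. -/
def DDSA.Step (𝔅 : DDSA B A V D) (c : B × (V → D)) (a : A) (c' : B × (V → D)) : Prop :=
  𝔅.trans c.1 a c'.1 ∧ (∀ v ∉ 𝔅.write a, c'.2 v = c.2 v) ∧ 𝔅.guard a c.2 c'.2

/-- A finite run presented by its length, configurations, and actions. -/
structure FinRun (B A V D : Type) where
  len : ℕ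
  cfg : ℕ → B × (V → D)
  act : ℕ → A

/-- A final run: all steps are DDSA steps and the last control state is final. -/
def DDSA.IsFinalRun (𝔅 : DDSA B A V D) (ρ : FinRun B A V D) : Prop :=
  (∀ i < ρ.len, 𝔅.Step (ρ.cfg i) (ρ.act i) (ρ.cfg (i + 1))) ∧ 𝔅.final (ρ.cfg ρ.len).1

/-- CTL*_f path formulas over control states `B` and (semantic) constraint
atoms over data assignments `V → D`.  State formulas are the path formulas
built from `⊤`, constraints, states, `∧`, `¬` and `E`. -/
inductive PForm (B V D : Type) where
  | tt
  | constr (c : (V → D) → Prop)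
  | state (b : B)
  | and (ψ₁ ψ₂ : PForm B V D)
  | not (ψ : PForm B V D)
  | next (ψ : PForm B V D)
  | glob (ψ : PForm B V D)
  | untl (ψ₁ ψ₂ : PForm B V D)
  | ex (ψ : PForm B V D)

/-- Finite-trace CTL*_f path semantics `ρ, i ⊨ ψ`. -/
def PForm.Sat (𝔅 : DDSA B A V D) : PForm B V D → FinRun B A V D → ℕ → Prop
  | .tt, _, _ => True
  | .constr c, ρ, i => c (ρ.cfg i).2
  | .state b, ρ, i => (ρ.cfg i).1 = b
  | .and ψ₁ ψ₂, ρ, i => PForm.Sat 𝔅 ψ₁ ρ i ∧ PForm.Sat 𝔅 ψ₂ ρ i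
  | .not ψ, ρ, i => ¬ PForm.Sat 𝔅 ψ ρ i
  | .next ψ, ρ, i => i < ρ.len ∧ PForm.Sat 𝔅 ψ ρ (i + 1)
  | .glob ψ, ρ, i => globSat (fun j => PForm.Sat 𝔅 ψ ρ j) (ρ.len - i) i
  | .untl ψ₁ ψ₂, ρ, i =>
      untilSat (fun j => PForm.Sat 𝔅 ψ₁ ρ j) (fun j => PForm.Sat 𝔅 ψ₂ ρ j) (ρ.len - i) i
  | .ex ψ, ρ, i =>
      ∃ ρ' : FinRun B A V D, 𝔅.IsFinalRun ρ' ∧ ρ'.cfg 0 = ρ.cfg i ∧ PForm.Sat 𝔅 ψ ρ' 0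

/-- LTL formulas over configuration maps `K : B → (V → D) → Prop`. -/
inductive LTLc (B V D : Type) where
  | atom (K : B → (V → D) → Prop)
  | and (ψ₁ ψ₂ : LTLc B V D)
  | not (ψ : LTLc B V D)
  | next (ψ : LTLc B V D)
  | glob (ψ : LTLc B V D)
  | untl (ψ₁ ψ₂ : LTLc B V D)

/-- Finite-trace LTL semantics over configuration maps. -/
def LTLc.Sat : LTLc B V D → FinRun B A V D → ℕ → Prop
  | .atom K, ρ, i => K (ρ.cfg i).1 (ρ.cfg i).2
  | .and ψ₁ ψ₂, ρ, i => LTLc.Sat ψ₁ ρ i ∧ LTLc.Sat ψ₂ ρ i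
  | .not ψ, ρ, i => ¬ LTLc.Sat ψ ρ i
  | .next ψ, ρ, i => i < ρ.len ∧ LTLc.Sat ψ ρ (i + 1)
  | .glob ψ, ρ, i => globSat (fun j => LTLc.Sat ψ ρ j) (ρ.len - i) i
  | .untl ψ₁ ψ₂, ρ, i =>
      untilSat (fun j => LTLc.Sat ψ₁ ρ j) (fun j => LTLc.Sat ψ₂ ρ j) (ρ.len - i) i

/-- The translation `toLTL` of a CTL*_f path formula to an LTL formula over
configuration maps, replacing `⊤`, constraints and control states by constant
configuration maps, commuting with Boolean and temporal operators, and
replacing each path-quantified subformula `E η` by the configuration map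
`sol η`. -/
def toLTL (sol : PForm B V D → B → (V → D) → Prop) : PForm B V D → LTLc B V D
  | .tt => .atom fun _ _ => True
  | .constr c => .atom fun _ α => c α
  | .state b => .atom fun b' _ => b' = b
  | .and ψ₁ ψ₂ => .and (toLTL sol ψ₁) (toLTL sol ψ₂)
  | .not ψ => .not (toLTL sol ψ)
  | .next ψ => .next (toLTL sol ψ)
  | .glob ψ => .glob (toLTL sol ψ)
  | .untl ψ₁ ψ₂ => .untl (toLTL sol ψ₁) (toLTL sol ψ₂)
  | .ex ψ => .atom (sol ψ)

/-- `EOccurs η ψ`: the path-quantified formula `E η` occurs as a subformula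
of `ψ`. -/
def EOccurs (η : PForm B V D) : PForm B V D → Prop
  | .tt => False
  | .constr _ => False
  | .state _ => False
  | .and ψ₁ ψ₂ => EOccurs η ψ₁ ∨ EOccurs η ψ₂
  | .not ψ => EOccurs η ψ
  | .next ψ => EOccurs η ψ
  | .glob ψ => EOccurs η ψ
  | .untl ψ₁ ψ₂ => EOccurs η ψ₁ ∨ EOccurs η ψ₂
  | .ex ψ => ψ = η ∨ EOccurs η ψ

theorem globSat_congr {p p' : ℕ → Prop} (h : ∀ j, p j ↔ p' j) :
    ∀ f i, globSat p f i ↔ globSat p' f i := by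
  intro f
  induction f with
  | zero => intro i; simpa [globSat] using h i
  | succ f ih => intro i; simp [globSat, h i, ih (i + 1)]

theorem untilSat_congr {p q p' q' : ℕ → Prop} (hp : ∀ j, p j ↔ p' j)
    (hq : ∀ j, q j ↔ q' j) : ∀ f i, untilSat p q f i ↔ untilSat p' q' f i := by
  intro f
  induction f with
  | zero => intro i; simpa [untilSat] using hq i
  | succ f ih => intro i; simp [untilSat, hp i, hq i, ih (i + 1)]

theorem toLTL_correct_aux (𝔅 : DDSA B A V D)
    (sol : PForm B V D → B → (V → D) → Prop) (ψ : PForm B V D)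
    (hsol : ∀ η, EOccurs η ψ → ∀ (b : B) (α : V → D),
      (∃ ρ' : FinRun B A V D, 𝔅.IsFinalRun ρ' ∧ ρ'.cfg 0 = (b, α) ∧
        PForm.Sat 𝔅 η ρ' 0) ↔ sol η b α) :
    ∀ (ρ : FinRun B A V D) (i : ℕ),
      PForm.Sat 𝔅 ψ ρ i ↔ LTLc.Sat (toLTL sol ψ) ρ i := by
  induction ψ with
  | tt => intro ρ i; simp [PForm.Sat, toLTL, LTLc.Sat]
  | constr c => intro ρ i; simp [PForm.Sat, toLTL, LTLc.Sat]
  | state b => intro ρ i; simp [PForm.Sat, toLTL, LTLc.Sat]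
  | and ψ₁ ψ₂ ih₁ ih₂ =>
    intro ρ i
    have h₁ := ih₁ (fun η hη => hsol η (Or.inl hη)) ρ i
    have h₂ := ih₂ (fun η hη => hsol η (Or.inr hη)) ρ i
    simp [PForm.Sat, toLTL, LTLc.Sat, h₁, h₂]
  | not ψ ih =>
    intro ρ i
    have h := ih (fun η hη => hsol η hη) ρ i
    simp [PForm.Sat, toLTL, LTLc.Sat, h]
  | next ψ ih =>
    intro ρ i
    have h := ih (fun η hη => hsol η hη) ρ (i + 1)
    simp [PForm.Sat, toLTL, LTLc.Sat, h]
  | glob ψ ih =>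
    intro ρ i
    exact globSat_congr (fun j => ih (fun η hη => hsol η hη) ρ j) (ρ.len - i) i
  | untl ψ₁ ψ₂ ih₁ ih₂ =>
    intro ρ i
    exact untilSat_congr (fun j => ih₁ (fun η hη => hsol η (Or.inl hη)) ρ j)
      (fun j => ih₂ (fun η hη => hsol η (Or.inr hη)) ρ j) (ρ.len - i) i
  | ex ψ ih =>
    intro ρ i
    have h := hsol ψ (Or.inl rfl) (ρ.cfg i).1 (ρ.cfg i).2
    simpa [PForm.Sat, toLTL, LTLc.Sat] using h

/-- **Correctness of the translation `toLTL`.**  Suppose that for every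
subformula `E η` of `ψ`, the configuration map `sol η` used by the translation
is a solution for `E η`, i.e., for all configurations `(b, α)` there is a
final run `ρ'` from `(b, α)` satisfying `η` iff `α ⊨ (sol η)(b)`.  Then for
every final run `ρ`, `ρ ⊨ ψ` (CTL*_f path semantics) iff
`ρ ⊨_LTL toLTL(ψ)` (finite-trace LTL semantics over configuration maps). -/
theorem toLTL_correct (𝔅 : DDSA B A V D)
    (sol : PForm B V D → B → (V → D) → Prop) (ψ : PForm B V D)
    (hsol : ∀ η, EOccurs η ψ → ∀ (b : B) (α : V → D),
      (∃ ρ' : FinRun B A V D, 𝔅.IsFinalRun ρ' ∧ ρ'.cfg 0 = (b, α) ∧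
        PForm.Sat 𝔅 η ρ' 0) ↔ sol η b α) :
    ∀ ρ : FinRun B A V D, 𝔅.IsFinalRun ρ →
      (PForm.Sat 𝔅 ψ ρ 0 ↔ LTLc.Sat (toLTL sol ψ) ρ 0) := by
  intro ρ _
  exact toLTL_correct_aux 𝔅 sol ψ hsol ρ 0
end

section
/- For the NFA-construction function δ: let ψ be a formula, ρ a finite run of length n, and 0 ≤ i ≤ n. Then ρ,i ⊨ ψ (finite-trace LTL semantics) if and only if there exists (ψ', ς) ∈ δ(ψ) such that (a) ς is λ-consistent with step i of ρ, and (b) either i < n and ρ,i+1 ⊨ ψ', or i = n and ψ' = ⊤. -/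
/-- LTL_f formulas in negation normal form over atoms `K` (configuration
maps): `⊤, ⊥`, atoms, `∨, ∧`, strong next `X`, weak next `X̃`, `G`, `U`. -/
inductive NForm (K : Type) where
  | tt
  | ff
  | atom (k : K)
  | or (ψ₁ ψ₂ : NForm K)
  | and (ψ₁ ψ₂ : NForm K)
  | next (ψ : NForm K)
  | wnext (ψ : NForm K)
  | glob (ψ : NForm K)
  | untl (ψ₁ ψ₂ : NForm K)

/-- Conjunction with simplification of `⊤`/`⊥`. -/
def NForm.sand {K : Type} : NForm K → NForm K → NForm K
  | .tt, ψ => ψ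
  | .ff, _ => .ff
  | ψ, .tt => ψ
  | _, .ff => .ff
  | ψ₁, ψ₂ => .and ψ₁ ψ₂

/-- Disjunction with simplification of `⊤`/`⊥`. -/
def NForm.sor {K : Type} : NForm K → NForm K → NForm K
  | .tt, _ => .tt
  | .ff, ψ => ψ
  | _, .tt => .tt
  | ψ, .ff => ψ
  | ψ₁, ψ₂ => .or ψ₁ ψ₂

/-- The markers `last` and `¬last`. -/
inductive Mk where
  | last
  | nlast

/-- Letters of the unfolding: sets of atoms (`Sum.inl`) and markers
(`Sum.inr`). -/
abbrev DLetter (K : Type) := Set (K ⊕ Mk)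

/-- Componentwise combination `R₁ ⊙ R₂` of two results of `δ`. -/
def comb {K : Type} (op : NForm K → NForm K → NForm K)
    (R₁ R₂ : Set (NForm K × DLetter K)) : Set (NForm K × DLetter K) :=
  {p | ∃ x ∈ R₁, ∃ y ∈ R₂, p = (op x.1 y.1, x.2 ∪ y.2)}

/-- `δ_λ = {(⊤, {last}), (⊥, {¬last})}`. -/
def deltaLam {K : Type} : Set (NForm K × DLetter K) :=
  {(.tt, {Sum.inr Mk.last}), (.ff, {Sum.inr Mk.nlast})}

/-- The one-step unfolding function `δ` of the NFA construction for
finite-trace LTL over configuration maps. -/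
def delta {K : Type} : NForm K → Set (NForm K × DLetter K)
  | .tt => {(.tt, ∅)}
  | .ff => {(.ff, ∅)}
  | .atom k => {(.tt, {Sum.inl k}), (.ff, ∅)}
  | .or ψ₁ ψ₂ => comb NForm.sor (delta ψ₁) (delta ψ₂)
  | .and ψ₁ ψ₂ => comb NForm.sand (delta ψ₁) (delta ψ₂)
  | .next ψ => {(ψ, {Sum.inr Mk.nlast}), (.ff, {Sum.inr Mk.last})}
  | .wnext ψ => {(ψ, {Sum.inr Mk.nlast}), (.tt, {Sum.inr Mk.last})}
  | .glob ψ =>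
      comb NForm.sand (delta ψ)
        (({(NForm.glob ψ, {Sum.inr Mk.nlast}), (.ff, {Sum.inr Mk.last})} :
            Set (NForm K × DLetter K)) ∪ deltaLam)
  | .untl ψ₁ ψ₂ =>
      comb NForm.sor (delta ψ₂)
        (comb NForm.sand (delta ψ₁)
          {(NForm.untl ψ₁ ψ₂, {Sum.inr Mk.nlast}), (.ff, {Sum.inr Mk.last})})

variable {K Cfg : Type}

/-- A letter `ς` is consistent with step `i` of the run `ρ` if all its
configuration-map atoms hold at `ρ i` (under evaluation `ev`). -/
def DConsistent (ev : K → Cfg → Prop) (ρ : ℕ → Cfg)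
    (ς : DLetter K) (i : ℕ) : Prop :=
  ∀ k, Sum.inl k ∈ ς → ev k (ρ i)

/-- λ-consistency with step `i` of a run of length `n`: consistency, and
`last ∉ ς` whenever `i < n`, and `¬last ∉ ς` whenever `i = n`. -/
def LConsistent (ev : K → Cfg → Prop) (ρ : ℕ → Cfg) (n : ℕ)
    (ς : DLetter K) (i : ℕ) : Prop :=
  DConsistent ev ρ ς i ∧
    (i < n → Sum.inr Mk.last ∉ ς) ∧ (i = n → Sum.inr Mk.nlast ∉ ς)

/-- Finite-trace semantics of negation-normal-form LTL formulas over a run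
`ρ` of length `n`, with atoms evaluated by `ev`. -/
def NForm.DSat (ev : K → Cfg → Prop) (ρ : ℕ → Cfg) (n : ℕ) :
    NForm K → ℕ → Prop
  | .tt, _ => True
  | .ff, _ => False
  | .atom k, i => ev k (ρ i)
  | .or ψ₁ ψ₂, i => NForm.DSat ev ρ n ψ₁ i ∨ NForm.DSat ev ρ n ψ₂ i
  | .and ψ₁ ψ₂, i => NForm.DSat ev ρ n ψ₁ i ∧ NForm.DSat ev ρ n ψ₂ i
  | .next ψ, i => i < n ∧ NForm.DSat ev ρ n ψ (i + 1)
  | .wnext ψ, i => i = n ∨ NForm.DSat ev ρ n ψ (i + 1)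
  | .glob ψ, i => globSat (fun j => NForm.DSat ev ρ n ψ j) (n - i) i
  | .untl ψ₁ ψ₂, i =>
      untilSat (fun j => NForm.DSat ev ρ n ψ₁ j)
        (fun j => NForm.DSat ev ρ n ψ₂ j) (n - i) i

section Helpers

variable {ev : K → Cfg → Prop} {ρ : ℕ → Cfg} {n i : ℕ}

/-- Auxiliary predicate: condition (a) ∧ (b) of the theorem. -/
def Good (ev : K → Cfg → Prop) (ρ : ℕ → Cfg) (n i : ℕ)
    (p : NForm K × DLetter K) : Prop :=
  LConsistent ev ρ n p.2 i ∧
    ((i < n ∧ NForm.DSat ev ρ n p.1 (i + 1)) ∨ (i = n ∧ p.1 = .tt))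

lemma lcons_union {ς₁ ς₂ : DLetter K} :
    LConsistent ev ρ n (ς₁ ∪ ς₂) i ↔
      LConsistent ev ρ n ς₁ i ∧ LConsistent ev ρ n ς₂ i := by
  simp only [LConsistent, DConsistent, Set.mem_union]
  constructor
  · rintro ⟨hd, h1, h2⟩
    exact ⟨⟨fun k hk => hd k (Or.inl hk), fun h hm => h1 h (Or.inl hm),
            fun h hm => h2 h (Or.inl hm)⟩,
           ⟨fun k hk => hd k (Or.inr hk), fun h hm => h1 h (Or.inr hm),
            fun h hm => h2 h (Or.inr hm)⟩⟩
  · rintro ⟨⟨hd1, ha1, hb1⟩, ⟨hd2, ha2, hb2⟩⟩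
    exact ⟨fun k hk => hk.elim (hd1 k) (hd2 k),
           fun h hm => hm.elim (ha1 h) (ha2 h),
           fun h hm => hm.elim (hb1 h) (hb2 h)⟩

lemma lcons_empty : LConsistent ev ρ n (∅ : DLetter K) i := by
  simp [LConsistent, DConsistent]

lemma lcons_nlast (h : i ≠ n) :
    LConsistent ev ρ n ({Sum.inr Mk.nlast} : DLetter K) i := by
  refine ⟨by simp [DConsistent], by simp, fun h' => by omega⟩

lemma lcons_last (h : i = n) :
    LConsistent ev ρ n ({Sum.inr Mk.last} : DLetter K) i := by
  refine ⟨by simp [DConsistent], fun h' => by omega, by simp⟩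

lemma lcons_nlast_iff :
    LConsistent ev ρ n ({Sum.inr Mk.nlast} : DLetter K) i ↔ i ≠ n := by
  constructor
  · rintro ⟨_, _, h⟩ rfl; exact h rfl rfl
  · exact lcons_nlast

lemma lcons_last_iff (hi : i ≤ n) :
    LConsistent ev ρ n ({Sum.inr Mk.last} : DLetter K) i ↔ i = n := by
  constructor
  · rintro ⟨_, h, _⟩
    by_contra hne
    exact h (by omega) rfl
  · exact lcons_last

lemma dsat_sand (a b : NForm K) (j : ℕ) :
    NForm.DSat ev ρ n (a.sand b) j ↔
      NForm.DSat ev ρ n a j ∧ NForm.DSat ev ρ n b j := by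
  cases a <;> cases b <;> simp [NForm.sand, NForm.DSat]

lemma dsat_sor (a b : NForm K) (j : ℕ) :
    NForm.DSat ev ρ n (a.sor b) j ↔
      NForm.DSat ev ρ n a j ∨ NForm.DSat ev ρ n b j := by
  cases a <;> cases b <;> simp [NForm.sor, NForm.DSat]

lemma sand_eq_tt (a b : NForm K) :
    a.sand b = .tt ↔ a = .tt ∧ b = .tt := by
  cases a <;> cases b <;> simp [NForm.sand]

lemma sor_eq_tt (a b : NForm K) :
    a.sor b = .tt ↔ a = .tt ∨ b = .tt := by
  cases a <;> cases b <;> simp [NForm.sor]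

lemma good_sand {x y : NForm K × DLetter K} :
    Good ev ρ n i (NForm.sand x.1 y.1, x.2 ∪ y.2) ↔
      Good ev ρ n i x ∧ Good ev ρ n i y := by
  rcases eq_or_ne i n with h | h <;>
    simp [Good, lcons_union, dsat_sand, sand_eq_tt, h, lt_irrefl] <;> tauto

lemma comb_sand_iff {R₁ R₂ : Set (NForm K × DLetter K)} :
    (∃ p ∈ comb NForm.sand R₁ R₂, Good ev ρ n i p) ↔
      (∃ p ∈ R₁, Good ev ρ n i p) ∧ (∃ p ∈ R₂, Good ev ρ n i p) := by
  constructor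
  · rintro ⟨p, ⟨x, hx, y, hy, rfl⟩, hg⟩
    rw [good_sand] at hg
    exact ⟨⟨x, hx, hg.1⟩, ⟨y, hy, hg.2⟩⟩
  · rintro ⟨⟨x, hx, gx⟩, ⟨y, hy, gy⟩⟩
    exact ⟨_, ⟨x, hx, y, hy, rfl⟩, good_sand.mpr ⟨gx, gy⟩⟩

lemma comb_sor_iff {R₁ R₂ : Set (NForm K × DLetter K)}
    (hC₁ : ∃ x ∈ R₁, LConsistent ev ρ n x.2 i)
    (hC₂ : ∃ y ∈ R₂, LConsistent ev ρ n y.2 i) :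
    (∃ p ∈ comb NForm.sor R₁ R₂, Good ev ρ n i p) ↔
      (∃ p ∈ R₁, Good ev ρ n i p) ∨ (∃ p ∈ R₂, Good ev ρ n i p) := by
  constructor
  · rintro ⟨p, ⟨x, hx, y, hy, rfl⟩, hc, hcond⟩
    rw [lcons_union] at hc
    rcases hcond with ⟨hlt, hsat⟩ | ⟨heq, htt⟩
    · rcases (dsat_sor _ _ _).mp hsat with h | h
      · exact Or.inl ⟨x, hx, hc.1, Or.inl ⟨hlt, h⟩⟩
      · exact Or.inr ⟨y, hy, hc.2, Or.inl ⟨hlt, h⟩⟩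
    · rcases (sor_eq_tt _ _).mp htt with h | h
      · exact Or.inl ⟨x, hx, hc.1, Or.inr ⟨heq, h⟩⟩
      · exact Or.inr ⟨y, hy, hc.2, Or.inr ⟨heq, h⟩⟩
  · rintro (⟨x, hx, cx, condx⟩ | ⟨y, hy, cy, condy⟩)
    · obtain ⟨y, hy, cy⟩ := hC₂
      refine ⟨_, ⟨x, hx, y, hy, rfl⟩, lcons_union.mpr ⟨cx, cy⟩, ?_⟩
      rcases condx with ⟨hlt, hsat⟩ | ⟨heq, htt⟩
      · exact Or.inl ⟨hlt, (dsat_sor _ _ _).mpr (Or.inl hsat)⟩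
      · exact Or.inr ⟨heq, (sor_eq_tt _ _).mpr (Or.inl htt)⟩
    · obtain ⟨x, hx, cx⟩ := hC₁
      refine ⟨_, ⟨x, hx, y, hy, rfl⟩, lcons_union.mpr ⟨cx, cy⟩, ?_⟩
      rcases condy with ⟨hlt, hsat⟩ | ⟨heq, htt⟩
      · exact Or.inl ⟨hlt, (dsat_sor _ _ _).mpr (Or.inr hsat)⟩
      · exact Or.inr ⟨heq, (sor_eq_tt _ _).mpr (Or.inr htt)⟩

lemma exists_lcons (hi : i ≤ n) :
    ∀ ψ : NForm K, ∃ p ∈ delta ψ, LConsistent ev ρ n p.2 i := by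
  have hmk : ∃ ς : DLetter K, (ς = {Sum.inr Mk.nlast} ∨ ς = {Sum.inr Mk.last}) ∧
      LConsistent ev ρ n ς i := by
    rcases lt_or_eq_of_le hi with h | h
    · exact ⟨_, Or.inl rfl, lcons_nlast (by omega)⟩
    · exact ⟨_, Or.inr rfl, lcons_last h⟩
  intro ψ
  induction ψ with
  | tt => exact ⟨(.tt, ∅), by simp [delta], lcons_empty⟩
  | ff => exact ⟨(.ff, ∅), by simp [delta], lcons_empty⟩
  | atom k => exact ⟨(.ff, ∅), by simp [delta], lcons_empty⟩
  | or ψ₁ ψ₂ ih₁ ih₂ =>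
      obtain ⟨x, hx, cx⟩ := ih₁; obtain ⟨y, hy, cy⟩ := ih₂
      exact ⟨_, ⟨x, hx, y, hy, rfl⟩, lcons_union.mpr ⟨cx, cy⟩⟩
  | and ψ₁ ψ₂ ih₁ ih₂ =>
      obtain ⟨x, hx, cx⟩ := ih₁; obtain ⟨y, hy, cy⟩ := ih₂
      exact ⟨_, ⟨x, hx, y, hy, rfl⟩, lcons_union.mpr ⟨cx, cy⟩⟩
  | next ψ ih =>
      obtain ⟨ς, hς | hς, hc⟩ := hmk
      · exact ⟨(ψ, {Sum.inr Mk.nlast}), by simp [delta], hς ▸ hc⟩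
      · exact ⟨(.ff, {Sum.inr Mk.last}), by simp [delta], hς ▸ hc⟩
  | wnext ψ ih =>
      obtain ⟨ς, hς | hς, hc⟩ := hmk
      · exact ⟨(ψ, {Sum.inr Mk.nlast}), by simp [delta], hς ▸ hc⟩
      · exact ⟨(.tt, {Sum.inr Mk.last}), by simp [delta], hς ▸ hc⟩
  | glob ψ ih =>
      obtain ⟨x, hx, cx⟩ := ih
      obtain ⟨ς, hς | hς, hc⟩ := hmk
      · exact ⟨_, ⟨x, hx, (NForm.glob ψ, {Sum.inr Mk.nlast}), by simp, rfl⟩,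
          lcons_union.mpr ⟨cx, hς ▸ hc⟩⟩
      · exact ⟨_, ⟨x, hx, (.ff, {Sum.inr Mk.last}), by simp, rfl⟩,
          lcons_union.mpr ⟨cx, hς ▸ hc⟩⟩
  | untl ψ₁ ψ₂ ih₁ ih₂ =>
      obtain ⟨x, hx, cx⟩ := ih₂
      obtain ⟨y, hy, cy⟩ := ih₁
      obtain ⟨ς, hς | hς, hc⟩ := hmk
      · exact ⟨_, ⟨x, hx, _, ⟨y, hy, (NForm.untl ψ₁ ψ₂, {Sum.inr Mk.nlast}),
          by simp, rfl⟩, rfl⟩, lcons_union.mpr ⟨cx, lcons_union.mpr ⟨cy, hς ▸ hc⟩⟩⟩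
      · exact ⟨_, ⟨x, hx, _, ⟨y, hy, (.ff, {Sum.inr Mk.last}),
          by simp, rfl⟩, rfl⟩, lcons_union.mpr ⟨cx, lcons_union.mpr ⟨cy, hς ▸ hc⟩⟩⟩

end Helpers

/-- **One-step correctness of `δ`.**  For a run `ρ` of length `n` and
`i ≤ n`: `ρ,i ⊨ ψ` iff there is `(ψ', ς) ∈ δ(ψ)` such that (a) `ς` is
λ-consistent with step `i` of `ρ`, and (b) either `i < n` and
`ρ,i+1 ⊨ ψ'`, or `i = n` and `ψ' = ⊤`. -/
theorem delta_correct (ev : K → Cfg → Prop) (ρ : ℕ → Cfg) (n i : ℕ)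
    (hi : i ≤ n) (ψ : NForm K) :
    NForm.DSat ev ρ n ψ i ↔
      ∃ p ∈ delta ψ, LConsistent ev ρ n p.2 i ∧
        ((i < n ∧ NForm.DSat ev ρ n p.1 (i + 1)) ∨ (i = n ∧ p.1 = .tt)) := by
  suffices h : NForm.DSat ev ρ n ψ i ↔ ∃ p ∈ delta ψ, Good ev ρ n i p by
    simpa [Good] using h
  induction ψ with
  | tt =>
      simp only [NForm.DSat, delta]
      constructor
      · intro _
        refine ⟨(.tt, ∅), rfl, lcons_empty, ?_⟩
        rcases lt_or_eq_of_le hi with h | h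
        · exact Or.inl ⟨h, trivial⟩
        · exact Or.inr ⟨h, rfl⟩
      · intro _; trivial
  | ff =>
      simp only [NForm.DSat, delta]
      constructor
      · exact False.elim
      · rintro ⟨p, hp, hc, hcond⟩
        simp only [Set.mem_singleton_iff] at hp; subst hp
        rcases hcond with ⟨_, hs⟩ | ⟨_, htt⟩
        · exact hs
        · exact nomatch htt
  | atom k =>
      simp only [NForm.DSat, delta]
      constructor
      · intro hk
        refine ⟨(.tt, {Sum.inl k}), by simp, ⟨?_, by simp, by simp⟩, ?_⟩
        · intro k' hk'
          simp only [Set.mem_singleton_iff, Sum.inl.injEq] at hk'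
          subst hk'; exact hk
        · rcases lt_or_eq_of_le hi with h | h
          · exact Or.inl ⟨h, trivial⟩
          · exact Or.inr ⟨h, rfl⟩
      · rintro ⟨p, hp, hc, hcond⟩
        simp only [Set.mem_insert_iff, Set.mem_singleton_iff] at hp
        rcases hp with rfl | rfl
        · exact hc.1 k rfl
        · rcases hcond with ⟨_, hs⟩ | ⟨_, htt⟩
          · exact hs.elim
          · exact nomatch htt
  | or ψ₁ ψ₂ ih₁ ih₂ =>
      simp only [NForm.DSat, delta]
      rw [ih₁, ih₂, comb_sor_iff (exists_lcons hi ψ₁) (exists_lcons hi ψ₂)]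
  | and ψ₁ ψ₂ ih₁ ih₂ =>
      simp only [NForm.DSat, delta]
      rw [ih₁, ih₂, comb_sand_iff]
  | next ψ ih =>
      simp only [NForm.DSat, delta]
      constructor
      · rintro ⟨hlt, hs⟩
        exact ⟨(ψ, {Sum.inr Mk.nlast}), by simp, lcons_nlast (by omega),
          Or.inl ⟨hlt, hs⟩⟩
      · rintro ⟨p, hp, hc, hcond⟩
        simp only [Set.mem_insert_iff, Set.mem_singleton_iff] at hp
        rcases hp with rfl | rfl
        · rcases hcond with ⟨hlt, hs⟩ | ⟨heq, _⟩
          · exact ⟨hlt, hs⟩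
          · exact absurd heq (lcons_nlast_iff.mp hc)
        · rcases hcond with ⟨_, hs⟩ | ⟨_, htt⟩
          · exact hs.elim
          · exact nomatch htt
  | wnext ψ ih =>
      simp only [NForm.DSat, delta]
      constructor
      · rintro (heq | hs)
        · exact ⟨(.tt, {Sum.inr Mk.last}), by simp, lcons_last heq,
            Or.inr ⟨heq, rfl⟩⟩
        · rcases lt_or_eq_of_le hi with h | h
          · exact ⟨(ψ, {Sum.inr Mk.nlast}), by simp, lcons_nlast (by omega),
              Or.inl ⟨h, hs⟩⟩
          · exact ⟨(.tt, {Sum.inr Mk.last}), by simp, lcons_last h,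
              Or.inr ⟨h, rfl⟩⟩
      · rintro ⟨p, hp, hc, hcond⟩
        simp only [Set.mem_insert_iff, Set.mem_singleton_iff] at hp
        rcases hp with rfl | rfl
        · rcases hcond with ⟨_, hs⟩ | ⟨heq, _⟩
          · exact Or.inr hs
          · exact absurd heq (lcons_nlast_iff.mp hc)
        · exact Or.inl ((lcons_last_iff hi).mp hc)
  | glob ψ ih =>
      have hmem : (∃ y ∈ (({(NForm.glob ψ, {Sum.inr Mk.nlast}),
            (.ff, {Sum.inr Mk.last})} : Set (NForm K × DLetter K)) ∪ deltaLam),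
            Good ev ρ n i y) ↔
          ((i < n ∧ NForm.DSat ev ρ n (NForm.glob ψ) (i + 1)) ∨ i = n) := by
        constructor
        · rintro ⟨y, hy, hc, hcond⟩
          simp only [deltaLam, Set.mem_union, Set.mem_insert_iff,
            Set.mem_singleton_iff] at hy
          rcases hy with (rfl | rfl) | (rfl | rfl)
          · rcases hcond with ⟨hlt, hs⟩ | ⟨_, htt⟩
            · exact Or.inl ⟨hlt, hs⟩
            · exact nomatch htt
          · rcases hcond with ⟨_, hs⟩ | ⟨_, htt⟩
            · exact hs.elim
            · exact nomatch htt
          · exact Or.inr ((lcons_last_iff hi).mp hc)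
          · rcases hcond with ⟨_, hs⟩ | ⟨_, htt⟩
            · exact hs.elim
            · exact nomatch htt
        · rintro (⟨hlt, hs⟩ | heq)
          · exact ⟨(NForm.glob ψ, {Sum.inr Mk.nlast}), by simp,
              lcons_nlast (by omega), Or.inl ⟨hlt, hs⟩⟩
          · exact ⟨(.tt, {Sum.inr Mk.last}), by simp [deltaLam],
              lcons_last heq, Or.inr ⟨heq, rfl⟩⟩
      simp only [delta]
      rw [comb_sand_iff, ← ih, hmem]
      rcases lt_or_eq_of_le hi with h | h
      · have hf : n - i = (n - (i + 1)) + 1 := by omega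
        show globSat _ (n - i) i ↔ _
        rw [hf]
        simp only [globSat]
        constructor
        · rintro ⟨h1, h2⟩; exact ⟨h1, Or.inl ⟨h, h2⟩⟩
        · rintro ⟨h1, ⟨_, h2⟩ | heq⟩
          · exact ⟨h1, h2⟩
          · omega
      · subst h
        show globSat _ (i - i) i ↔ _
        simp [Nat.sub_self, globSat, lt_irrefl]
  | untl ψ₁ ψ₂ ih₁ ih₂ =>
      have hT : (∃ y ∈ ({(NForm.untl ψ₁ ψ₂, {Sum.inr Mk.nlast}),
            (.ff, {Sum.inr Mk.last})} : Set (NForm K × DLetter K)),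
            Good ev ρ n i y) ↔
          (i < n ∧ NForm.DSat ev ρ n (NForm.untl ψ₁ ψ₂) (i + 1)) := by
        constructor
        · rintro ⟨y, hy, hc, hcond⟩
          simp only [Set.mem_insert_iff, Set.mem_singleton_iff] at hy
          rcases hy with rfl | rfl
          · rcases hcond with ⟨hlt, hs⟩ | ⟨_, htt⟩
            · exact ⟨hlt, hs⟩
            · exact nomatch htt
          · rcases hcond with ⟨_, hs⟩ | ⟨_, htt⟩
            · exact hs.elim
            · exact nomatch htt
        · rintro ⟨hlt, hs⟩
          exact ⟨(NForm.untl ψ₁ ψ₂, {Sum.inr Mk.nlast}), by simp,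
            lcons_nlast (by omega), Or.inl ⟨hlt, hs⟩⟩
      have hC₂ : ∃ y ∈ comb NForm.sand (delta ψ₁)
          ({(NForm.untl ψ₁ ψ₂, {Sum.inr Mk.nlast}),
            (.ff, {Sum.inr Mk.last})} : Set (NForm K × DLetter K)),
          LConsistent ev ρ n y.2 i := by
        obtain ⟨x, hx, cx⟩ := exists_lcons hi ψ₁
        rcases lt_or_eq_of_le hi with h | h
        · exact ⟨_, ⟨x, hx, (NForm.untl ψ₁ ψ₂, {Sum.inr Mk.nlast}), by simp, rfl⟩,
            lcons_union.mpr ⟨cx, lcons_nlast (by omega)⟩⟩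
        · exact ⟨_, ⟨x, hx, (.ff, {Sum.inr Mk.last}), by simp, rfl⟩,
            lcons_union.mpr ⟨cx, lcons_last h⟩⟩
      simp only [delta]
      rw [comb_sor_iff (exists_lcons hi ψ₂) hC₂, ← ih₂, comb_sand_iff, ← ih₁, hT]
      rcases lt_or_eq_of_le hi with h | h
      · have hf : n - i = (n - (i + 1)) + 1 := by omega
        show untilSat _ _ (n - i) i ↔ _
        rw [hf]
        simp only [untilSat]
        constructor
        · rintro (hq | ⟨hp, hu⟩)
          · exact Or.inl hq
          · exact Or.inr ⟨hp, h, hu⟩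
        · rintro (hq | ⟨hp, _, hu⟩)
          · exact Or.inl hq
          · exact Or.inr ⟨hp, hu⟩
      · subst h
        show untilSat _ _ (i - i) i ↔ _
        simp [Nat.sub_self, untilSat, lt_irrefl]
end

section
/- For any pair (χ, ς) ∈ δ(ψ) where ψ is an LTL formula over configuration maps: (1) if last ∈ ς and ¬last ∉ ς then χ = ⊤ or χ = ⊥; (3) if χ is neither ⊤ nor ⊥ then ς contains last or ¬last. -/
variable {K Cfg : Type}

/-- The conjunction of properties (1) and (3). -/
def MkP {K : Type} (p : NForm K × DLetter K) : Prop :=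
  (Sum.inr Mk.last ∈ p.2 ∧ Sum.inr Mk.nlast ∉ p.2 →
      p.1 = NForm.tt ∨ p.1 = NForm.ff) ∧
  (p.1 ≠ NForm.tt → p.1 ≠ NForm.ff →
      Sum.inr Mk.last ∈ p.2 ∨ Sum.inr Mk.nlast ∈ p.2)

lemma sor_triv {K : Type} (a b : NForm K)
    (ha : a = NForm.tt ∨ a = NForm.ff) (hb : b = NForm.tt ∨ b = NForm.ff) :
    NForm.sor a b = NForm.tt ∨ NForm.sor a b = NForm.ff := by
  rcases ha with rfl | rfl <;> rcases hb with rfl | rfl <;> simp [NForm.sor]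

lemma sand_triv {K : Type} (a b : NForm K)
    (ha : a = NForm.tt ∨ a = NForm.ff) (hb : b = NForm.tt ∨ b = NForm.ff) :
    NForm.sand a b = NForm.tt ∨ NForm.sand a b = NForm.ff := by
  rcases ha with rfl | rfl <;> rcases hb with rfl | rfl <;> simp [NForm.sand]

lemma sor_ne {K : Type} (a b : NForm K)
    (h1 : NForm.sor a b ≠ NForm.tt) (h2 : NForm.sor a b ≠ NForm.ff) :
    (a ≠ NForm.tt ∧ a ≠ NForm.ff) ∨ (b ≠ NForm.tt ∧ b ≠ NForm.ff) := by
  cases a <;> cases b <;> simp_all [NForm.sor]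

lemma sand_ne {K : Type} (a b : NForm K)
    (h1 : NForm.sand a b ≠ NForm.tt) (h2 : NForm.sand a b ≠ NForm.ff) :
    (a ≠ NForm.tt ∧ a ≠ NForm.ff) ∨ (b ≠ NForm.tt ∧ b ≠ NForm.ff) := by
  cases a <;> cases b <;> simp_all [NForm.sand]

lemma comb_MkP {K : Type} (op : NForm K → NForm K → NForm K)
    (hop1 : ∀ a b : NForm K, (a = NForm.tt ∨ a = NForm.ff) →
      (b = NForm.tt ∨ b = NForm.ff) → op a b = NForm.tt ∨ op a b = NForm.ff)
    (hop2 : ∀ a b : NForm K, op a b ≠ NForm.tt → op a b ≠ NForm.ff →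
      (a ≠ NForm.tt ∧ a ≠ NForm.ff) ∨ (b ≠ NForm.tt ∧ b ≠ NForm.ff))
    (R₁ R₂ : Set (NForm K × DLetter K))
    (h1 : ∀ p ∈ R₁, MkP p) (h2 : ∀ p ∈ R₂, MkP p) :
    ∀ p ∈ comb op R₁ R₂, MkP p := by
  rintro p ⟨x, hx, y, hy, rfl⟩
  have Hx := h1 x hx
  have Hy := h2 y hy
  constructor
  · rintro ⟨hl, hnl⟩
    simp only [Set.mem_union, not_or] at hl hnl
    have hxt : x.1 = NForm.tt ∨ x.1 = NForm.ff := by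
      by_cases hxt : x.1 = NForm.tt
      · exact Or.inl hxt
      by_cases hxf : x.1 = NForm.ff
      · exact Or.inr hxf
      have := (Hx.2 hxt hxf).resolve_right hnl.1
      exact Hx.1 ⟨this, hnl.1⟩
    have hyt : y.1 = NForm.tt ∨ y.1 = NForm.ff := by
      by_cases hyt : y.1 = NForm.tt
      · exact Or.inl hyt
      by_cases hyf : y.1 = NForm.ff
      · exact Or.inr hyf
      have := (Hy.2 hyt hyf).resolve_right hnl.2
      exact Hy.1 ⟨this, hnl.2⟩
    exact hop1 _ _ hxt hyt
  · intro ht hf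
    rcases hop2 _ _ ht hf with ⟨h1', h2'⟩ | ⟨h1', h2'⟩
    · rcases Hx.2 h1' h2' with h | h
      · exact Or.inl (Set.mem_union_left _ h)
      · exact Or.inr (Set.mem_union_left _ h)
    · rcases Hy.2 h1' h2' with h | h
      · exact Or.inl (Set.mem_union_right _ h)
      · exact Or.inr (Set.mem_union_right _ h)

lemma delta_MkP {K : Type} (ψ : NForm K) : ∀ p ∈ delta ψ, MkP p := by
  induction ψ with
  | tt => rintro p hp; simp only [delta, Set.mem_singleton_iff] at hp
          subst hp; exact ⟨fun _ => Or.inl rfl, fun h _ => absurd rfl h⟩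
  | ff => rintro p hp; simp only [delta, Set.mem_singleton_iff] at hp
          subst hp; exact ⟨fun _ => Or.inr rfl, fun _ h => absurd rfl h⟩
  | atom k =>
      rintro p hp
      rcases hp with hp | hp <;> subst hp
      · exact ⟨fun _ => Or.inl rfl, fun h _ => absurd rfl h⟩
      · exact ⟨fun _ => Or.inr rfl, fun _ h => absurd rfl h⟩
  | or ψ₁ ψ₂ ih₁ ih₂ => exact comb_MkP _ sor_triv sor_ne _ _ ih₁ ih₂
  | and ψ₁ ψ₂ ih₁ ih₂ => exact comb_MkP _ sand_triv sand_ne _ _ ih₁ ih₂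
  | next ψ ih =>
      rintro p hp
      rcases hp with hp | hp <;> subst hp
      · exact ⟨fun ⟨h, _⟩ => by simp at h, fun _ _ => Or.inr rfl⟩
      · exact ⟨fun _ => Or.inr rfl, fun _ h => absurd rfl h⟩
  | wnext ψ ih =>
      rintro p hp
      rcases hp with hp | hp <;> subst hp
      · exact ⟨fun ⟨h, _⟩ => by simp at h, fun _ _ => Or.inr rfl⟩
      · exact ⟨fun _ => Or.inl rfl, fun h _ => absurd rfl h⟩
  | glob ψ ih =>
      refine comb_MkP _ sand_triv sand_ne _ _ ih ?_
      rintro p hp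
      rcases hp with (hp | hp) | (hp | hp) <;> subst hp
      · exact ⟨fun ⟨h, _⟩ => by simp at h, fun _ _ => Or.inr rfl⟩
      · exact ⟨fun _ => Or.inr rfl, fun _ h => absurd rfl h⟩
      · exact ⟨fun _ => Or.inl rfl, fun h _ => absurd rfl h⟩
      · exact ⟨fun _ => Or.inr rfl, fun _ h => absurd rfl h⟩
  | untl ψ₁ ψ₂ ih₁ ih₂ =>
      refine comb_MkP _ sor_triv sor_ne _ _ ih₂ ?_
      refine comb_MkP _ sand_triv sand_ne _ _ ih₁ ?_
      rintro p hp
      rcases hp with hp | hp <;> subst hp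
      · exact ⟨fun ⟨h, _⟩ => by simp at h, fun _ _ => Or.inr rfl⟩
      · exact ⟨fun _ => Or.inr rfl, fun _ h => absurd rfl h⟩

/-- **Structural properties of `δ` (Lemma "delta last", parts (1) and (3)).**
For every `(χ, ς) ∈ δ(ψ)`:
(1) if `last ∈ ς` and `¬last ∉ ς` then `χ = ⊤` or `χ = ⊥`;
(3) if `χ` is neither `⊤` nor `⊥` then `ς` contains `last` or `¬last`. -/
theorem delta_last_markers {K : Type} (ψ : NForm K)
    (p : NForm K × DLetter K) (hp : p ∈ delta ψ) :
    (Sum.inr Mk.last ∈ p.2 ∧ Sum.inr Mk.nlast ∉ p.2 →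
        p.1 = NForm.tt ∨ p.1 = NForm.ff) ∧
    (p.1 ≠ NForm.tt → p.1 ≠ NForm.ff →
        Sum.inr Mk.last ∈ p.2 ∨ Sum.inr Mk.nlast ∈ p.2) := by
  exact delta_MkP ψ p hp
end

section
/- Assume the product automaton N^ψ_{B,b} is finite and correct (Lemmas nfa and pc hold). Then there exists a final run ρ: (b, α₀) →* (b_F, α_F) of the DDSA B with ρ ⊨_LTL ψ if and only if N^ψ_{B,b} has a final state (b_F, q_F, φ) such that φ is satisfied by the assignment γ over V ∪ V₀ defined by γ(V₀) = α₀(V) and γ(V) = α_F(V). -/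
variable {B A V D Q : Type}

/-- Configuration maps `K : B → (V → D) → Prop`; letters of the NFA alphabet
`Σ = 2^Confs` are sets of configuration maps. -/
abbrev CMap (B V D : Type) := B → (V → D) → Prop

/-- `w(b)` — the conjunction `⋀_{K ∈ w} K(b)` of a letter `w` evaluated at
control state `b`. -/
def wEval (w : Set (CMap B V D)) (b : B) (α : V → D) : Prop :=
  ∀ K ∈ w, K b α

/-- `φ_ν` — the formula `⋀_{v ∈ V} v = ν(v)` over `V ∪ V₀`
(`Sum.inl` = current variables `V`, `Sum.inr` = initial copy `V₀`). -/
def phiNu (α : (V ⊕ V) → D) : Prop := ∀ v, α (Sum.inl v) = α (Sum.inr v)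

/-- The update `update(φ, a) = ∃U. φ(U) ∧ Δ_a(U, V)` of a formula over
`V ∪ V₀`, keeping the initial copy `V₀` fixed. -/
def updH (𝔅 : DDSA B A V D) (φ : ((V ⊕ V) → D) → Prop) (a : A)
    (α : (V ⊕ V) → D) : Prop :=
  ∃ u : V → D,
    φ (Sum.elim u fun v => α (Sum.inr v)) ∧
    𝔅.guard a u (fun v => α (Sum.inl v)) ∧
    ∀ v ∉ 𝔅.write a, α (Sum.inl v) = u v

/-- History constraint `hist(σ, θ⃗)` of a symbolic run with actions `acts`
and verification constraints `θ`. -/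
def histH (𝔅 : DDSA B A V D) (acts : ℕ → A) (θ : ℕ → (V → D) → Prop) :
    ℕ → ((V ⊕ V) → D) → Prop
  | 0, α => phiNu α ∧ θ 0 (fun v => α (Sum.inl v))
  | n + 1, α =>
      updH 𝔅 (histH 𝔅 acts θ n) (acts n) α ∧
      θ (n + 1) (fun v => α (Sum.inl v))

/-- A path of length `n` in the product automaton `N^ψ_{𝔅,b}` of the DDSA
`𝔅`, a control state `b` and an NFA with transition relation `ntrans` and
initial state `q0` over the alphabet of sets of configuration maps: the path
starts at the initial node `(b̂, q0, φ_ν)`, takes the dummy step into `b`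
reading the letter `letters 0`, and then follows DDSA transitions (with
actions `acts`) and NFA transitions simultaneously; each node carries a
formula `forms i` which must equal `update(previous, a) ∧ w(b')` and be
satisfiable. -/
def IsProductPath (𝔅 : DDSA B A V D)
    (ntrans : Q → Set (CMap B V D) → Q → Prop) (q0 : Q) (b : B) (n : ℕ)
    (bs : ℕ → B) (qs : ℕ → Q) (acts : ℕ → A)
    (letters : ℕ → Set (CMap B V D))
    (forms : ℕ → ((V ⊕ V) → D) → Prop) : Prop :=
  bs 0 = b ∧
  ntrans q0 (letters 0) (qs 0) ∧
  (forms 0 = fun α =>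
    phiNu α ∧ wEval (letters 0) (bs 0) (fun v => α (Sum.inl v))) ∧
  (∃ α, forms 0 α) ∧
  ∀ i < n,
    𝔅.trans (bs i) (acts i) (bs (i + 1)) ∧
    ntrans (qs i) (letters (i + 1)) (qs (i + 1)) ∧
    (forms (i + 1) = fun α =>
      updH 𝔅 (forms i) (acts i) α ∧
      wEval (letters (i + 1)) (bs (i + 1)) (fun v => α (Sum.inl v))) ∧
    (∃ α, forms (i + 1) α)

/-- The NFA accepts the word `⟨w 0, …, w n⟩`. -/
def AcceptsWord (ntrans : Q → Set (CMap B V D) → Q → Prop) (q0 : Q)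
    (nfinal : Q → Prop) (n : ℕ) (w : ℕ → Set (CMap B V D)) : Prop :=
  ∃ qs : ℕ → Q, ntrans q0 (w 0) (qs 0) ∧
    (∀ i < n, ntrans (qs i) (w (i + 1)) (qs (i + 1))) ∧ nfinal (qs n)

/-- From a satisfying assignment of the endpoint formula of a product path,
extract a concrete run abstracted by the path (Lemma abstraction / pc). -/
lemma product_path_run (𝔅 : DDSA B A V D)
    (ntrans : Q → Set (CMap B V D) → Q → Prop) (q0 : Q) (b : B) (n : ℕ)
    (bs : ℕ → B) (qs : ℕ → Q) (acts : ℕ → A)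
    (letters : ℕ → Set (CMap B V D)) (forms : ℕ → ((V ⊕ V) → D) → Prop)
    (hpath : IsProductPath 𝔅 ntrans q0 b n bs qs acts letters forms) :
    ∀ i ≤ n, ∀ α, forms i α →
      ∃ ds : ℕ → V → D, ds 0 = (fun v => α (Sum.inr v)) ∧
        ds i = (fun v => α (Sum.inl v)) ∧
        (∀ j < i, 𝔅.Step (bs j, ds j) (acts j) (bs (j + 1), ds (j + 1))) ∧
        (∀ j ≤ i, wEval (letters j) (bs j) (ds j)) := by
  obtain ⟨hb0, hq0, hf0, hex0, hstep⟩ := hpath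
  intro i
  induction i with
  | zero =>
    intro _ α hα
    rw [hf0] at hα
    refine ⟨fun _ => fun v => α (Sum.inl v), ?_, rfl, ?_, ?_⟩
    · funext v; exact hα.1 v
    · intro j hj; omega
    · intro j hj
      interval_cases j
      exact hα.2
  | succ i ih =>
    intro hin α hα
    rw [(hstep i (by omega)).2.2.1] at hα
    obtain ⟨⟨u, hu, hg, hwr⟩, hwev⟩ := hα
    obtain ⟨ds, hd0, hdi, hds, hdw⟩ := ih (by omega) _ hu
    refine ⟨fun j => if j ≤ i then ds j else fun v => α (Sum.inl v), ?_, ?_, ?_, ?_⟩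
    · simpa using hd0
    · simp
    · intro j hj
      by_cases hji : j < i
      · have h1 : j ≤ i := le_of_lt hji
        have h2 : j + 1 ≤ i := hji
        simpa [h1, h2] using hds j hji
      · have hj' : j = i := by omega
        subst hj'
        have h1 : j ≤ j := le_rfl
        have h2 : ¬ (j + 1 ≤ j) := by omega
        simp only [h1, h2, if_true, if_false]
        refine ⟨(hstep j (by omega)).1, ?_, ?_⟩
        · intro v hv
          simpa [hdi] using hwr v hv
        · simpa [hdi] using hg
    · intro j hj
      by_cases hji : j ≤ i
      · simpa [hji] using hdw j hji
      · have hj' : j = i + 1 := by omega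
        subst hj'
        simpa [hji] using hwev

/-- **Theorem (model checking correctness).**  Let `N^ψ_{𝔅,b}` be the product
automaton of the DDSA `𝔅`, control state `b`, and the NFA `(ntrans, q0,
nfinal)` for the LTL formula `ψ` over configuration maps, whose satisfaction
relation on runs is `SatPsi n cfgs`.  Assume the NFA is correct (Lemma nfa):
for every final run of `𝔅`, the NFA accepts some word consistent with the run
iff the run satisfies `ψ`.  Then for all `b, α₀, b_F, α_F`: there is a final
run `ρ : (b, α₀) →* (b_F, α_F)` of `𝔅` with `ρ ⊨_LTL ψ` iff the product
automaton has a final state `(b_F, q_F, φ)` (endpoint of a product path, with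
`b_F` final in `𝔅` and `q_F` final in the NFA) such that `φ` is satisfied by
the assignment `γ` over `V ∪ V₀` with `γ(V₀) = α₀` and `γ(V) = α_F`. -/
theorem product_model_checking (𝔅 : DDSA B A V D)
    (ntrans : Q → Set (CMap B V D) → Q → Prop) (q0 : Q) (nfinal : Q → Prop)
    (SatPsi : ℕ → (ℕ → B × (V → D)) → Prop)
    (hnfa : ∀ (n : ℕ) (cfgs : ℕ → B × (V → D)) (acts : ℕ → A),
      (∀ i < n, 𝔅.Step (cfgs i) (acts i) (cfgs (i + 1))) →
      𝔅.final (cfgs n).1 →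
      ((∃ w, AcceptsWord ntrans q0 nfinal n w ∧
          ∀ i ≤ n, wEval (w i) (cfgs i).1 (cfgs i).2) ↔ SatPsi n cfgs))
    (b : B) (α₀ αF : V → D) (bF : B) :
    (∃ (n : ℕ) (cfgs : ℕ → B × (V → D)) (acts : ℕ → A),
        cfgs 0 = (b, α₀) ∧ cfgs n = (bF, αF) ∧
        (∀ i < n, 𝔅.Step (cfgs i) (acts i) (cfgs (i + 1))) ∧
        𝔅.final bF ∧ SatPsi n cfgs) ↔
    (∃ (n : ℕ) (bs : ℕ → B) (qs : ℕ → Q) (acts : ℕ → A)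
        (letters : ℕ → Set (CMap B V D))
        (forms : ℕ → ((V ⊕ V) → D) → Prop),
        IsProductPath 𝔅 ntrans q0 b n bs qs acts letters forms ∧
        bs n = bF ∧ 𝔅.final bF ∧ nfinal (qs n) ∧
        forms n (Sum.elim αF α₀)) := by
  constructor
  · rintro ⟨n, cfgs, acts, h0, hn, hstep, hfin, hsat⟩
    have hfin' : 𝔅.final (cfgs n).1 := by rw [hn]; exact hfin
    obtain ⟨w, ⟨qs, hq0, hqstep, hqfin⟩, hw⟩ := (hnfa n cfgs acts hstep hfin').2 hsat
    set forms : ℕ → ((V ⊕ V) → D) → Prop := fun i =>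
      Nat.rec
        (fun α => phiNu α ∧ wEval (w 0) (cfgs 0).1 (fun v => α (Sum.inl v)))
        (fun i F => fun α => updH 𝔅 F (acts i) α ∧
          wEval (w (i + 1)) (cfgs (i + 1)).1 (fun v => α (Sum.inl v))) i
      with hforms
    have key : ∀ i ≤ n, forms i (Sum.elim (cfgs i).2 α₀) := by
      intro i
      induction i with
      | zero =>
        intro _
        refine ⟨?_, ?_⟩
        · intro v
          simp [show cfgs 0 = (b, α₀) from h0]
        · exact hw 0 (by omega)
      | succ i ih =>
        intro hin
        refine ⟨⟨(cfgs i).2, ih (by omega), ?_, ?_⟩, hw (i + 1) hin⟩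
        · exact (hstep i (by omega)).2.2
        · intro v hv
          exact (hstep i (by omega)).2.1 v hv
    refine ⟨n, fun i => (cfgs i).1, qs, acts, w, forms, ?_, ?_, hfin, hqfin, ?_⟩
    · refine ⟨by show (cfgs 0).1 = b; rw [h0], hq0, rfl, ⟨_, key 0 (by omega)⟩, ?_⟩
      intro i hi
      exact ⟨(hstep i hi).1, hqstep i hi, rfl, ⟨_, key (i + 1) hi⟩⟩
    · show (cfgs n).1 = bF; rw [hn]
    · have := key n le_rfl
      rwa [hn] at this
  · rintro ⟨n, bs, qs, acts, letters, forms, hpath, hbn, hfin, hqn, hform⟩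
    obtain ⟨ds, hd0, hdn, hds, hdw⟩ :=
      product_path_run 𝔅 ntrans q0 b n bs qs acts letters forms hpath n le_rfl _ hform
    have hd0' : ds 0 = α₀ := hd0
    have hdn' : ds n = αF := hdn
    have hfin' : 𝔅.final (bs n, ds n).1 := by simpa [hbn] using hfin
    refine ⟨n, fun j => (bs j, ds j), acts, ?_, ?_, hds, hfin, ?_⟩
    · show (bs 0, ds 0) = (b, α₀); rw [hpath.1, hd0']
    · show (bs n, ds n) = (bF, αF); rw [hbn, hdn']
    · exact (hnfa n _ acts hds hfin').1
        ⟨letters, ⟨qs, hpath.2.1, fun i hi => (hpath.2.2.2.2 i hi).2.1, hqn⟩, hdw⟩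
end
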